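/- Let α > 0 be fixed. Then E[tr((Σ (XᵗX + αI)⁻²)²)] = O(p⁻⁴) as p → ∞; that is, there exist a constant C > 0 and an integer p₀ such that for all p ≥ p₀, E[tr((Σ (XᵗX + αI)⁻²)²)] ≤ C/p⁴. -/

import Mathlib

open MeasureTheory ProbabilityTheory Matrix Filter

instance matrixMeasurableSpace {m n : ℕ} : MeasurableSpace (Matrix (Fin m) (Fin n) ℝ) :=
  inferInstanceAs (MeasurableSpace (Fin m → Fin n → ℝ))

/-- Law of a `p × n` random matrix with i.i.d. standard Gaussian entries. -/
noncomputable def stdGaussianMatrix (p n : ℕ) : Measure (Matrix (Fin p) (Fin n) ℝ) :=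
  Measure.pi (fun _ : Fin p => Measure.pi (fun _ : Fin n => gaussianReal 0 1))

/-- Law of a `p × n` random matrix whose rows are i.i.d. mean-zero Gaussian vectors
with covariance `S` (realized as standard Gaussian matrix times the square root of `S`). -/
noncomputable def gaussianRowsMatrix (p n : ℕ) (S : Matrix (Fin n) (Fin n) ℝ)
    (hS : S.PosDef) : Measure (Matrix (Fin p) (Fin n) ℝ) :=
  (stdGaussianMatrix p n).map (fun Z => Z * (hS.posSemidef.1.eigenvectorUnitary.1 *
    diagonal (fun i => Real.sqrt (hS.posSemidef.1.eigenvalues i)) *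
    (star hS.posSemidef.1.eigenvectorUnitary : Matrix (Fin n) (Fin n) ℝ)))

/-!
Write `X = Z R` with `Z` a standard Gaussian matrix and `R = Σ^{1/2}`, and `A = XᵀX + αI`.
If `S` is symmetric and `A ⪰ βI`, then `A⁻¹` shrinks Euclidean lengths by the factor `β⁻¹`, so
`tr((S A⁻²)²) = ‖A⁻¹ S A⁻¹‖_F² ≤ tr(SᵀS) / β⁴`. With `β = α` this bounds the integrand everywhere.
On the event that every entry of `ZᵀZ - pI` is at most `p / (2n)` in absolute value we have
`ZᵀZ ⪰ (p/2) I`, hence `A ⪰ (pc/2) I` where `cI ⪯ Σ`, and the integrand is `O(p⁻⁴)`.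
Each entry of `ZᵀZ - pI` is a sum of `p` i.i.d. centred variables with moments of all orders;
expanding its eighth power, only index tuples in which no index occurs exactly once contribute,
and there are `O(p⁴)` of them, so Markov's inequality bounds the probability of the complementary
event by `O(p⁻⁴)`.
-/

open scoped MatrixOrder

instance matrixBorelSpace {m n : ℕ} : BorelSpace (Matrix (Fin m) (Fin n) ℝ) :=
  inferInstanceAs (BorelSpace (Fin m → Fin n → ℝ))

instance (p n : ℕ) : IsProbabilityMeasure (stdGaussianMatrix p n) :=
  inferInstanceAs (IsProbabilityMeasure
    (Measure.pi fun _ : Fin p => Measure.pi fun _ : Fin n => gaussianReal 0 1))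

lemma measurable_matrix_inv {n : ℕ} : Measurable fun A : Matrix (Fin n) (Fin n) ℝ => A⁻¹ := by
  simp_rw [Matrix.inv_def, Ring.inverse_eq_inv']
  exact (continuous_id.matrix_det.measurable.inv).smul continuous_id.matrix_adjugate.measurable

namespace Matrix

lemma posDef_of_smul_one_le {n : Type*} [DecidableEq n] {A : Matrix n n ℝ} {β : ℝ} (hβ : 0 < β)
    (hA : β • 1 ≤ A) : A.PosDef := by
  have h := (PosDef.one.smul hβ).add_posSemidef (le_iff.mp hA)
  rwa [add_sub_cancel] at h

section Trace

variable {m n : Type*} [Fintype m] [Fintype n]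

lemma trace_transpose_mul_self_eq_sum (N : Matrix m n ℝ) :
    (Nᵀ * N).trace = ∑ j, Nᵀ j ⬝ᵥ Nᵀ j := by
  simp [trace, mul_apply, dotProduct]

lemma trace_transpose_mul_self_nonneg (N : Matrix m n ℝ) : 0 ≤ (Nᵀ * N).trace := by
  rw [trace_transpose_mul_self_eq_sum]
  exact Finset.sum_nonneg fun j _ => dotProduct_self_star_nonneg _

lemma trace_transpose_mul_mul_le {B : Matrix n n ℝ} {c : ℝ}
    (hB : ∀ x, c * (B *ᵥ x ⬝ᵥ B *ᵥ x) ≤ x ⬝ᵥ x) (M : Matrix n m ℝ) :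
    c * ((B * M)ᵀ * (B * M)).trace ≤ (Mᵀ * M).trace := by
  simp only [trace_transpose_mul_self_eq_sum, Finset.mul_sum]
  refine Finset.sum_le_sum fun j _ => ?_
  have : (B * M)ᵀ j = B *ᵥ Mᵀ j := by
    ext i; simp [mul_apply, mulVec, dotProduct]
  rw [this]
  exact hB _

lemma trace_transpose_mul_self_mul_comm {S B : Matrix n n ℝ} (hS : Sᵀ = S) (hB : Bᵀ = B) :
    ((S * B)ᵀ * (S * B)).trace = ((B * S)ᵀ * (B * S)).trace := by
  rw [transpose_mul, transpose_mul, hS, hB, show S * B * (B * S) = S * (B * B * S) by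
    simp [mul_assoc], trace_mul_comm]
  simp only [mul_assoc]

lemma trace_sq_mul_sq_eq [DecidableEq n] {S B : Matrix n n ℝ} (hS : Sᵀ = S) (hB : Bᵀ = B) :
    ((S * B ^ 2) ^ 2).trace = ((B * (S * B))ᵀ * (B * (S * B))).trace := by
  rw [transpose_mul, transpose_mul, hS, hB,
    show (S * B ^ 2) ^ 2 = S * B * B * S * B * B by simp [pow_two, mul_assoc], trace_mul_comm]
  simp only [mul_assoc]

end Trace

section Loewner

variable {m n : Type*} [Fintype m] [Fintype n] [DecidableEq n]

lemma sq_mul_dotProduct_inv_mulVec_le {A : Matrix n n ℝ} {β : ℝ} (hβ : 0 < β) (hA : β • 1 ≤ A)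
    (x : n → ℝ) : β ^ 2 * (A⁻¹ *ᵥ x ⬝ᵥ A⁻¹ *ᵥ x) ≤ x ⬝ᵥ x := by
  set y := A⁻¹ *ᵥ x
  have hAy : A *ᵥ y = x := by
    rw [mulVec_mulVec,
      mul_nonsing_inv _ (A.isUnit_iff_isUnit_det.mp (posDef_of_smul_one_le hβ hA).isUnit),
      one_mulVec]
  have hq : β * (y ⬝ᵥ y) ≤ y ⬝ᵥ x := by
    simpa [sub_mulVec, hAy, smul_mulVec, dotProduct_smul] using
      (le_iff.mp hA).dotProduct_mulVec_nonneg y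
  have hcs : (y ⬝ᵥ x) ^ 2 ≤ (y ⬝ᵥ y) * (x ⬝ᵥ x) := by
    simpa only [dotProduct, sq] using Finset.sum_mul_sq_le_sq_mul_sq Finset.univ y x
  have hy : 0 ≤ y ⬝ᵥ y := by simpa using dotProduct_self_star_nonneg y
  have hx : 0 ≤ x ⬝ᵥ x := by simpa using dotProduct_self_star_nonneg x
  rcases hy.eq_or_lt with hy0 | hy0
  · rw [← hy0, mul_zero]; exact hx
  have : (β * (y ⬝ᵥ y)) ^ 2 ≤ (y ⬝ᵥ y) * (x ⬝ᵥ x) :=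
    (pow_le_pow_left₀ (by positivity) hq 2).trans hcs
  nlinarith

lemma trace_sq_mul_inv_sq_le {S A : Matrix n n ℝ} (hS : Sᵀ = S) {β : ℝ} (hβ : 0 < β)
    (hA : β • 1 ≤ A) :
    0 ≤ ((S * A⁻¹ ^ 2) ^ 2).trace ∧ ((S * A⁻¹ ^ 2) ^ 2).trace ≤ (Sᵀ * S).trace / β ^ 4 := by
  set B := A⁻¹
  have hBT : Bᵀ = B := by
    simpa using (posDef_of_smul_one_le hβ hA).inv.isHermitian.eq
  have hB : ∀ x, β ^ 2 * (B *ᵥ x ⬝ᵥ B *ᵥ x) ≤ x ⬝ᵥ x := sq_mul_dotProduct_inv_mulVec_le hβ hA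
  rw [trace_sq_mul_sq_eq hS hBT]
  refine ⟨trace_transpose_mul_self_nonneg _, ?_⟩
  rw [le_div_iff₀ (by positivity), mul_comm]
  calc β ^ 4 * ((B * (S * B))ᵀ * (B * (S * B))).trace
      = β ^ 2 * (β ^ 2 * ((B * (S * B))ᵀ * (B * (S * B))).trace) := by ring
    _ ≤ β ^ 2 * ((S * B)ᵀ * (S * B)).trace := by
      gcongr
      exact trace_transpose_mul_mul_le hB _
    _ = β ^ 2 * ((B * S)ᵀ * (B * S)).trace := by rw [trace_transpose_mul_self_mul_comm hS hBT]
    _ ≤ (Sᵀ * S).trace := trace_transpose_mul_mul_le hB S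

lemma smul_one_le_of_abs_sub_le {M : Matrix n n ℝ} (hM : M.IsHermitian) {t ε : ℝ}
    (h : ∀ i j, |(M - t • 1) i j| ≤ ε) : (t - Fintype.card n * ε) • 1 ≤ M := by
  set E := M - t • 1
  have hME : M - (t - Fintype.card n * ε) • 1 = E + (Fintype.card n * ε) • 1 := by
    simp only [E, sub_smul]; abel
  rw [le_iff, hME]
  refine PosSemidef.of_dotProduct_mulVec_nonneg ?_ fun x => ?_
  · rw [← hME]
    exact hM.sub (isHermitian_one.smul (IsSelfAdjoint.all _))
  have hquad : -(x ⬝ᵥ E *ᵥ x) ≤ ε * (∑ i, |x i|) ^ 2 := by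
    simp only [dotProduct, mulVec, Finset.mul_sum, sq, Finset.sum_mul, ← Finset.sum_neg_distrib]
    refine Finset.sum_le_sum fun i _ => Finset.sum_le_sum fun j _ => ?_
    have : |x i * (E i j * x j)| ≤ ε * |x i| * |x j| := by
      rw [abs_mul, abs_mul]
      nlinarith [h i j, abs_nonneg (x i), mul_nonneg (abs_nonneg (x i)) (abs_nonneg (x j))]
    linarith [neg_abs_le (x i * (E i j * x j))]
  have hcs : (∑ i, |x i|) ^ 2 ≤ Fintype.card n * (x ⬝ᵥ x) := by
    simpa [dotProduct, sq_abs, sq] using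
      sq_sum_le_card_mul_sum_sq (s := Finset.univ) (f := fun i => |x i|)
  rcases isEmpty_or_nonempty n with hn | ⟨⟨i⟩⟩
  · simp [dotProduct]
  have hε : 0 ≤ ε := (abs_nonneg _).trans (h i i)
  simp only [star_trivial, add_mulVec, smul_mulVec, one_mulVec, dotProduct_add, dotProduct_smul,
    smul_eq_mul]
  nlinarith

lemma PosDef.exists_pos_smul_one_le {S : Matrix n n ℝ} (hS : S.PosDef) :
    ∃ c : ℝ, 0 < c ∧ c • 1 ≤ S := by
  rcases subsingleton_or_nontrivial (Matrix n n ℝ) with h | h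
  · exact ⟨1, one_pos, (Subsingleton.elim _ _).le⟩
  simpa [Algebra.algebraMap_eq_smul_one] using
    (CFC.exists_pos_algebraMap_le_iff hS.isHermitian.isSelfAdjoint).2
      fun x hx => hS.isStrictlyPositive.spectrum_pos hx

lemma transpose_cfc (f : ℝ → ℝ) (S : Matrix n n ℝ) : (cfc f S)ᵀ = cfc f S := by
  simpa [star_eq_conjTranspose] using (cfc_predicate f S).star_eq

lemma cfc_sqrt_mul_self {S : Matrix n n ℝ} (hS : S.PosSemidef) :
    cfc Real.sqrt S * cfc Real.sqrt S = S := by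
  rw [← cfc_mul Real.sqrt Real.sqrt S]
  conv_rhs => rw [← cfc_id' ℝ S]
  refine cfc_congr fun x hx => Real.mul_self_sqrt ?_
  exact spectrum_nonneg_of_nonneg (nonneg_iff_posSemidef.mpr hS) hx

lemma smul_one_le_transpose_mul_add {S R : Matrix n n ℝ} (hR : Rᵀ = R) (hRR : R * R = S)
    {c s α : ℝ} (hc : c • 1 ≤ S) (hs : 0 ≤ s) (hα : 0 ≤ α) {Z : Matrix m n ℝ}
    (hZ : s • 1 ≤ Zᵀ * Z) : (s * c) • 1 ≤ (Z * R)ᵀ * (Z * R) + α • 1 := by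
  have hRsa : IsSelfAdjoint R := by simpa [IsSelfAdjoint, star_eq_conjTranspose] using hR
  have hsS : (s * c) • (1 : Matrix n n ℝ) ≤ s • S := by
    rw [le_iff, mul_smul, ← smul_sub]
    exact (le_iff.mp hc).smul hs
  have hα1 : (0 : Matrix n n ℝ) ≤ α • 1 := nonneg_iff_posSemidef.mpr (PosSemidef.one.smul hα)
  calc (s * c) • 1 ≤ s • S := hsS
    _ ≤ R * (Zᵀ * Z) * R := by simpa [← hRR, mul_assoc] using hRsa.conjugate_le_conjugate hZ
    _ = (Z * R)ᵀ * (Z * R) := by simp only [transpose_mul, hR, Matrix.mul_assoc]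
    _ ≤ (Z * R)ᵀ * (Z * R) + α • 1 := le_add_of_nonneg_right hα1

end Loewner

end Matrix

namespace Finset

lemma sum_pow_eq_sum_prod_pow_card {ι R : Type*} [Fintype ι] [DecidableEq ι] [CommSemiring R]
    (x : ι → R) (N : ℕ) :
    (∑ i, x i) ^ N = ∑ κ : Fin N → ι, ∏ i, x i ^ #{l | κ l = i} := by
  rw [← Fin.prod_const, prod_univ_sum, Fintype.piFinset_univ]
  refine sum_congr rfl fun κ _ => ?_
  rw [← prod_fiberwise_of_maps_to fun l _ => mem_univ (κ l)]
  refine prod_congr rfl fun i _ => ?_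
  rw [prod_congr rfl fun l hl => congrArg x (mem_filter.mp hl).2, prod_const]

lemma card_image_le_of_card_fiber_ne_one {ι : Type*} [DecidableEq ι] {m : ℕ}
    (κ : Fin (2 * m) → ι) (hκ : ∀ i, #{l | κ l = i} ≠ 1) : #(univ.image κ) ≤ m := by
  have hsum := card_eq_sum_card_image κ univ
  have h2 : #(univ.image κ) * 2 ≤ ∑ i ∈ univ.image κ, #{l | κ l = i} := by
    rw [← smul_eq_mul]
    refine card_nsmul_le_sum _ _ _ fun i hi => ?_
    obtain ⟨l, -, rfl⟩ := mem_image.mp hi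
    have h0 : #{l' | κ l' = κ l} ≠ 0 := card_ne_zero_of_mem (mem_filter.mpr ⟨mem_univ l, rfl⟩)
    have := hκ (κ l)
    omega
  simp only [card_univ, Fintype.card_fin] at hsum
  omega

lemma card_filter_card_image_le {ι : Type*} [Fintype ι] [DecidableEq ι] {m : ℕ}
    (hm : m ≤ Fintype.card ι) (N : ℕ) :
    #{κ : Fin N → ι | #(univ.image κ) ≤ m} ≤ Fintype.card ι ^ m * m ^ N := by
  have hsub : ({κ : Fin N → ι | #(univ.image κ) ≤ m} : Finset _)
      ⊆ (powersetCard m (univ : Finset ι)).biUnion fun T => Fintype.piFinset fun _ => T := by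
    intro κ hκ
    obtain ⟨T, hT, hTcard⟩ := exists_superset_card_eq (mem_filter.mp hκ).2 (by simpa using hm)
    exact mem_biUnion.mpr ⟨T, mem_powersetCard_univ.mpr hTcard,
      Fintype.mem_piFinset.mpr fun l => hT (mem_image_of_mem κ (mem_univ l))⟩
  calc _ ≤ _ := card_le_card hsub
    _ ≤ ∑ T ∈ powersetCard m (univ : Finset ι), #(Fintype.piFinset fun _ : Fin N => T) :=
      card_biUnion_le
    _ = (Fintype.card ι).choose m * m ^ N := by
      rw [sum_congr rfl fun T hT => by
        rw [Fintype.card_piFinset, prod_const, (mem_powersetCard.mp hT).2, card_univ,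
          Fintype.card_fin], sum_const, card_powersetCard, card_univ, smul_eq_mul]
    _ ≤ Fintype.card ι ^ m * m ^ N := Nat.mul_le_mul_right _ (Nat.choose_le_pow _ _)

end Finset

namespace MeasureTheory

variable {Ω : Type*} [MeasurableSpace Ω] {μ : Measure Ω}

lemma MemLp.integrable_pow_of_le [IsFiniteMeasure μ] {f : Ω → ℝ} {N : ℕ} (hf : MemLp f N μ)
    {k : ℕ} (hk : k ≤ N) : Integrable (fun x => f x ^ k) μ :=
  ((hf.mono_exponent (by exact_mod_cast hk)).integrable_norm_pow').mono' (hf.1.pow k)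
    (ae_of_all _ fun x => (norm_pow _ _).le)

lemma measureReal_lt_abs_le_integral_pow_div [IsFiniteMeasure μ] {g : Ω → ℝ} {m : ℕ}
    (hg : Integrable (fun ω => g ω ^ (2 * m)) μ) {ε : ℝ} (hε : 0 < ε) :
    μ.real {ω | ε < |g ω|} ≤ (∫ ω, g ω ^ (2 * m) ∂μ) / ε ^ (2 * m) := by
  have hpow_nonneg (x : ℝ) : 0 ≤ x ^ (2 * m) := by rw [pow_mul]; positivity
  rw [le_div_iff₀ (pow_pos hε _), mul_comm]
  refine le_trans ?_ (mul_meas_ge_le_integral_of_nonneg (ae_of_all _ fun ω => hpow_nonneg (g ω))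
    hg (ε ^ (2 * m)))
  refine mul_le_mul_of_nonneg_left (measureReal_mono fun ω hω => ?_) (hpow_nonneg ε)
  show ε ^ (2 * m) ≤ g ω ^ (2 * m)
  rw [← (even_two_mul m).pow_abs (g ω)]
  exact pow_le_pow_left₀ hε.le (le_of_lt hω) _

lemma integral_le_add_mul_measureReal [IsProbabilityMeasure μ] {g : Ω → ℝ}
    (hg : AEStronglyMeasurable g μ) {B : Set Ω} (hB : MeasurableSet B) {K D : ℝ} (hK : 0 ≤ K)
    (hg0 : ∀ ω, 0 ≤ g ω) (hgD : ∀ ω, g ω ≤ D) (hgK : ∀ ω ∉ B, g ω ≤ K) :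
    ∫ ω, g ω ∂μ ≤ K + D * μ.real B := by
  have hint : Integrable (fun ω => K + D * B.indicator (fun _ => 1) ω) μ :=
    (integrable_const K).add (((integrable_const 1).indicator hB).const_mul D)
  calc ∫ ω, g ω ∂μ ≤ ∫ ω, K + D * B.indicator (fun _ => 1) ω ∂μ := by
        refine integral_mono (Integrable.of_bound hg D (ae_of_all _ fun ω => ?_)) hint fun ω => ?_
        · rw [Real.norm_of_nonneg (hg0 ω)]; exact hgD ω
        by_cases hω : ω ∈ B
        · simp [hω]; linarith [hgD ω]
        · simpa [hω] using hgK ω hω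
    _ = K + D * μ.real B := by
        rw [integral_add (integrable_const K) (((integrable_const 1).indicator hB).const_mul D),
          integral_const_mul, integral_indicator_const _ hB]
        simp

end MeasureTheory

namespace ProbabilityTheory

open Finset

section Moments

variable {E : Type*} [MeasurableSpace E] {μ : Measure E} {f : E → ℝ} {m : ℕ}

lemma prod_integral_pow_card_eq_zero {ι : Type*} [Fintype ι] [DecidableEq ι]
    (hmean : ∫ x, f x ∂μ = 0) (κ : Fin (2 * m) → ι) (hκ : m < #(univ.image κ)) :
    ∏ i, ∫ x, f x ^ #{l | κ l = i} ∂μ = 0 := by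
  obtain ⟨i, hi⟩ : ∃ i, #{l | κ l = i} = 1 := by
    by_contra! h
    exact hκ.not_ge (card_image_le_of_card_fiber_ne_one κ h)
  exact prod_eq_zero (mem_univ i) (by simpa [hi] using hmean)

lemma prod_integral_pow_card_le [IsProbabilityMeasure μ] {ι : Type*} [Fintype ι] [DecidableEq ι]
    (hmean : ∫ x, f x ∂μ = 0) {M : ℝ} (hM1 : 1 ≤ M) (hM : ∀ k ≤ 2 * m, |∫ x, f x ^ k ∂μ| ≤ M)
    (κ : Fin (2 * m) → ι) : ∏ i, ∫ x, f x ^ #{l | κ l = i} ∂μ ≤ M ^ m := by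
  by_cases h1 : ∃ i, #{l | κ l = i} = 1
  · obtain ⟨i, hi⟩ := h1
    rw [prod_eq_zero (mem_univ i) (by simpa [hi] using hmean)]
    positivity
  push Not at h1
  calc ∏ i, ∫ x, f x ^ #{l | κ l = i} ∂μ ≤ ∏ i, |∫ x, f x ^ #{l | κ l = i} ∂μ| := by
        rw [← abs_prod]; exact le_abs_self _
    _ ≤ ∏ i, if i ∈ univ.image κ then M else 1 := by
        refine prod_le_prod (fun _ _ => abs_nonneg _) fun i _ => ?_
        split_ifs with hi
        · exact hM _ ((card_le_univ _).trans (by simp))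
        · have : #{l | κ l = i} = 0 := by simpa [filter_eq_empty_iff] using hi
          simp [this]
    _ = M ^ #(univ.image κ) := by rw [prod_ite_mem, univ_inter, prod_const]
    _ ≤ M ^ m := pow_le_pow_right₀ hM1 (card_image_le_of_card_fiber_ne_one κ h1)

variable {p : ℕ}

lemma integrable_pi_prod_pow_card [IsFiniteMeasure μ] (hf : MemLp f (2 * m : ℕ) μ)
    (κ : Fin (2 * m) → Fin p) :
    Integrable (fun Z => ∏ k, f (Z k) ^ #{l | κ l = k}) (Measure.pi fun _ : Fin p => μ) :=
  Integrable.fintype_prod fun _ => hf.integrable_pow_of_le ((card_le_univ _).trans (by simp))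

lemma integrable_pi_sum_pow [IsFiniteMeasure μ] (hf : MemLp f (2 * m : ℕ) μ) :
    Integrable (fun Z => (∑ k, f (Z k)) ^ (2 * m)) (Measure.pi fun _ : Fin p => μ) := by
  simp_rw [sum_pow_eq_sum_prod_pow_card]
  exact integrable_finsetSum _ fun κ _ => integrable_pi_prod_pow_card hf κ

theorem integral_pi_sum_pow_le [IsProbabilityMeasure μ] (hf : MemLp f (2 * m : ℕ) μ)
    (hmean : ∫ x, f x ∂μ = 0) {M : ℝ} (hM1 : 1 ≤ M) (hM : ∀ k ≤ 2 * m, |∫ x, f x ^ k ∂μ| ≤ M)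
    (hmp : m ≤ p) :
    ∫ Z, (∑ k, f (Z k)) ^ (2 * m) ∂(Measure.pi fun _ : Fin p => μ)
      ≤ p ^ m * m ^ (2 * m) * M ^ m := by
  set G := ({κ : Fin (2 * m) → Fin p | #(univ.image κ) ≤ m} : Finset _)
  simp_rw [sum_pow_eq_sum_prod_pow_card]
  rw [integral_finsetSum _ fun κ _ => integrable_pi_prod_pow_card hf κ,
    sum_congr rfl fun κ _ => integral_fintype_prod_eq_prod fun k x => f x ^ #{l | κ l = k},
    ← sum_subset (filter_subset _ univ : G ⊆ univ) fun κ _ hκ =>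
      prod_integral_pow_card_eq_zero hmean κ (by simpa [G] using hκ)]
  calc ∑ κ ∈ G, ∏ k, ∫ x, f x ^ #{l | κ l = k} ∂μ ≤ #G • M ^ m :=
        sum_le_card_nsmul _ _ _ fun κ _ => prod_integral_pow_card_le hmean hM1 hM κ
    _ ≤ ((p ^ m * m ^ (2 * m) : ℕ) : ℝ) * M ^ m := by
        rw [nsmul_eq_mul]
        gcongr
        simpa using card_filter_card_image_le (ι := Fin p) (by simpa using hmp) (2 * m)
    _ = _ := by push_cast; ring

end Moments

section Gaussian

open scoped NNReal

variable {ι : Type*} [Fintype ι]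

lemma memLp_eval_mul_eval (i j : ι) (q : ℝ≥0) :
    MemLp (fun r : ι → ℝ => r i * r j) q (Measure.pi fun _ => gaussianReal 0 1) := by
  have : ENNReal.HolderTriple (2 * q : ℝ≥0) (2 * q : ℝ≥0) q := by
    constructor
    push_cast
    rw [← two_mul, ENNReal.mul_inv (by simp) (by simp), ← mul_assoc,
      ENNReal.mul_inv_cancel (by simp) (by simp), one_mul]
  have hcoord (k : ι) := (memLp_id_gaussianReal (μ := 0) (v := 1) (2 * q)).comp_measurePreserving
    (measurePreserving_eval (fun _ : ι => gaussianReal 0 1) k)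
  exact (hcoord j).mul' (hcoord i)

lemma integral_eval_mul_eval [DecidableEq ι] (i j : ι) :
    ∫ r : ι → ℝ, r i * r j ∂(Measure.pi fun _ => gaussianReal 0 1) = (1 : Matrix ι ι ℝ) i j := by
  rcases eq_or_ne i j with rfl | hij
  · have h := variance_eq_sub (memLp_id_gaussianReal (μ := 0) (v := 1) 2)
    rw [variance_id_gaussianReal] at h
    simp only [← sq, Matrix.one_apply_eq]
    rw [integral_comp_eval (X := fun _ => ℝ) (μ := fun _ => gaussianReal 0 1) (i := i)
      (f := fun x => x ^ 2) (by fun_prop)]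
    simpa [integral_id_gaussianReal] using h.symm
  · have hind := (iIndepFun_pi (μ := fun _ : ι => gaussianReal 0 1) (X := fun _ x => x)
      fun _ => aemeasurable_id).indepFun hij
    rw [hind.integral_fun_mul_eq_mul_integral (measurable_pi_apply i).aestronglyMeasurable
      (measurable_pi_apply j).aestronglyMeasurable]
    simp [integral_eval, integral_id_gaussianReal, hij]

end Gaussian

lemma sum_mul_sub_one_eq_gram_sub {p n : ℕ} (Z : Matrix (Fin p) (Fin n) ℝ) (i j : Fin n) :
    ∑ k, (Z k i * Z k j - (1 : Matrix (Fin n) (Fin n) ℝ) i j)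
      = (Zᵀ * Z - (p : ℝ) • (1 : Matrix (Fin n) (Fin n) ℝ)) i j := by
  simp [sum_sub_distrib, Matrix.mul_apply]

def gramDeviationEvent (p n : ℕ) (ε : ℝ) : Set (Matrix (Fin p) (Fin n) ℝ) :=
  {Z | ∃ i j, ε < |(Zᵀ * Z - (p : ℝ) • (1 : Matrix (Fin n) (Fin n) ℝ)) i j|}

lemma measurableSet_gramDeviationEvent (p n : ℕ) (ε : ℝ) :
    MeasurableSet (gramDeviationEvent p n ε) := by
  simp only [gramDeviationEvent, Set.ofPred_exists]
  exact .iUnion fun i => .iUnion fun j => measurableSet_lt measurable_const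
    (Continuous.measurable (by fun_prop))

lemma measureReal_lt_abs_gram_sub_apply_le {p n : ℕ} (hp : 4 ≤ p) (i j : Fin n) {δ M : ℝ}
    (hδ : 0 < δ) (hM1 : 1 ≤ M) (hM : ∀ k ≤ 2 * 4,
      |∫ r, (r i * r j - (1 : Matrix (Fin n) (Fin n) ℝ) i j) ^ k
        ∂(Measure.pi fun _ => gaussianReal 0 1)| ≤ M) :
    (stdGaussianMatrix p n).real
      {Z | δ * p < |(Zᵀ * Z - (p : ℝ) • (1 : Matrix (Fin n) (Fin n) ℝ)) i j|}
        ≤ 4 ^ 8 * M ^ 4 / δ ^ 8 / (p : ℝ) ^ 4 := by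
  have hp0 : (0 : ℝ) < p := by positivity
  have hf : MemLp (fun r : Fin n → ℝ => r i * r j - (1 : Matrix (Fin n) (Fin n) ℝ) i j)
      (2 * 4 : ℕ) (Measure.pi fun _ => gaussianReal 0 1) :=
    (memLp_eval_mul_eval i j 8).sub (memLp_const _)
  have hmean : ∫ r : Fin n → ℝ, r i * r j - (1 : Matrix (Fin n) (Fin n) ℝ) i j
      ∂(Measure.pi fun _ => gaussianReal 0 1) = 0 := by
    rw [integral_sub (memLp_one_iff_integrable.mp (by simpa using memLp_eval_mul_eval i j 1))
      (integrable_const _), integral_eval_mul_eval]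
    simp
  simp_rw [← sum_mul_sub_one_eq_gram_sub]
  refine (measureReal_lt_abs_le_integral_pow_div (integrable_pi_sum_pow hf)
    (by positivity)).trans ?_
  calc _ ≤ p ^ 4 * 4 ^ (2 * 4) * M ^ 4 / (δ * p) ^ (2 * 4) := by
        gcongr
        exact integral_pi_sum_pow_le hf hmean hM1 hM hp
    _ = 4 ^ 8 * M ^ 4 / δ ^ 8 / (p : ℝ) ^ 4 := by
        field_simp
        ring

theorem exists_measureReal_gramDeviationEvent_le (n : ℕ) {δ : ℝ} (hδ : 0 < δ) :
    ∃ C : ℝ, 0 ≤ C ∧ ∀ p : ℕ, 4 ≤ p →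
      (stdGaussianMatrix p n).real (gramDeviationEvent p n (δ * p)) ≤ C / (p : ℝ) ^ 4 := by
  obtain ⟨M₀, hM₀⟩ := Finite.exists_le fun t : Fin n × Fin n × Fin 9 =>
    |∫ r, (r t.1 * r t.2.1 - (1 : Matrix (Fin n) (Fin n) ℝ) t.1 t.2.1) ^ (t.2.2 : ℕ)
      ∂(Measure.pi fun _ => gaussianReal 0 1)|
  set M := max 1 M₀
  have hM (i j : Fin n) (k : ℕ) (hk : k ≤ 2 * 4) := (hM₀ (i, j, ⟨k, by omega⟩)).trans
    (le_max_right 1 M₀)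
  refine ⟨n ^ 2 * (4 ^ 8 * M ^ 4 / δ ^ 8), by positivity, fun p hp => ?_⟩
  have hunion : gramDeviationEvent p n (δ * p)
      = ⋃ i, ⋃ j, {Z | δ * p < |(Zᵀ * Z - (p : ℝ) • (1 : Matrix (Fin n) (Fin n) ℝ)) i j|} := by
    ext; simp [gramDeviationEvent]
  rw [hunion]
  calc _ ≤ ∑ i, (stdGaussianMatrix p n).real
        (⋃ j, {Z | δ * p < |(Zᵀ * Z - (p : ℝ) • (1 : Matrix (Fin n) (Fin n) ℝ)) i j|}) :=
        measureReal_iUnion_fintype_le _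
    _ ≤ ∑ i : Fin n, ∑ j : Fin n, 4 ^ 8 * M ^ 4 / δ ^ 8 / (p : ℝ) ^ 4 :=
        sum_le_sum fun i _ => (measureReal_iUnion_fintype_le _).trans <| sum_le_sum fun j _ =>
          measureReal_lt_abs_gram_sub_apply_le hp i j hδ (le_max_left _ _) (hM i j)
    _ = _ := by simp; ring

end ProbabilityTheory

section GaussianRows

variable {p n : ℕ} {S : Matrix (Fin n) (Fin n) ℝ} {α : ℝ}

lemma gaussianRowsMatrix_eq_map (hS : S.PosDef) :
    gaussianRowsMatrix p n S hS = (stdGaussianMatrix p n).map (· * cfc Real.sqrt S) := by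
  rw [gaussianRowsMatrix, hS.posSemidef.1.cfc_eq Real.sqrt]; rfl

lemma measurable_trace_sq_mul_inv_sq :
    Measurable fun X : Matrix (Fin p) (Fin n) ℝ => ((S * (Xᵀ * X + α • 1)⁻¹ ^ 2) ^ 2).trace := by
  have h : Continuous fun B : Matrix (Fin n) (Fin n) ℝ => ((S * B ^ 2) ^ 2).trace := by fun_prop
  exact h.measurable.comp (measurable_matrix_inv.comp (Continuous.measurable (by fun_prop)))

lemma trace_sq_mul_inv_sq_le_of_notMem_gramDeviationEvent {R : Matrix (Fin n) (Fin n) ℝ}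
    (hR : Rᵀ = R) (hRR : R * R = S) {c : ℝ} (hc : 0 < c) (hcS : c • 1 ≤ S) (hα : 0 ≤ α)
    (hn : 0 < n) (hp : 0 < p) {Z : Matrix (Fin p) (Fin n) ℝ}
    (hZ : Z ∉ gramDeviationEvent p n (1 / (2 * n) * p)) :
    ((S * ((Z * R)ᵀ * (Z * R) + α • 1)⁻¹ ^ 2) ^ 2).trace ≤ 16 * (Sᵀ * S).trace / c ^ 4 / p ^ 4 := by
  simp only [gramDeviationEvent, Set.mem_ofPred_eq, not_exists, not_lt] at hZ
  have hZZ := smul_one_le_of_abs_sub_le (by simpa using isHermitian_conjTranspose_mul_self Z) hZ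
  rw [Fintype.card_fin, show (p : ℝ) - n * (1 / (2 * n) * p) = p / 2 by field_simp; ring] at hZZ
  have hST : Sᵀ = S := by rw [← hRR, transpose_mul, hR]
  refine ((trace_sq_mul_inv_sq_le hST (by positivity)
    (smul_one_le_transpose_mul_add hR hRR hcS (by positivity) hα hZZ)).2).trans_eq ?_
  field_simp
  ring

end GaussianRows

theorem stmt7 {n : ℕ} (hn : 0 < n) (S : Matrix (Fin n) (Fin n) ℝ) (hS : S.PosDef)
    {α : ℝ} (hα : 0 < α) :
    ∃ C : ℝ, 0 < C ∧ ∃ p₀ : ℕ, ∀ p : ℕ, p₀ ≤ p →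
      (∫ X, ((S * (Xᵀ * X + α • 1)⁻¹ ^ 2) ^ 2).trace ∂(gaussianRowsMatrix p n S hS))
        ≤ C / (p : ℝ) ^ 4 := by
  obtain ⟨c, hc, hcS⟩ := hS.exists_pos_smul_one_le
  obtain ⟨C, hC0, hC⟩ :=
    exists_measureReal_gramDeviationEvent_le n (δ := 1 / (2 * n)) (by positivity)
  have hST : Sᵀ = S := by simpa using hS.isHermitian.eq
  set T := (Sᵀ * S).trace
  have hT : 0 ≤ T := trace_transpose_mul_self_nonneg S
  refine ⟨16 * T / c ^ 4 + T / α ^ 4 * C + 1, by positivity, 4, fun p hp => ?_⟩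
  have hp0 : 0 < p := by omega
  set R := cfc Real.sqrt S
  have hRm : Measurable fun Z : Matrix (Fin p) (Fin n) ℝ => Z * R :=
    (continuous_id.matrix_mul continuous_const).measurable
  have hbound (X : Matrix (Fin p) (Fin n) ℝ) := trace_sq_mul_inv_sq_le hST hα
    (le_add_of_nonneg_left (nonneg_iff_posSemidef.mpr
      (by simpa using posSemidef_conjTranspose_mul_self X)))
  rw [gaussianRowsMatrix_eq_map,
    integral_map hRm.aemeasurable measurable_trace_sq_mul_inv_sq.aestronglyMeasurable]
  calc _ ≤ 16 * T / c ^ 4 / p ^ 4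
        + T / α ^ 4 * (stdGaussianMatrix p n).real (gramDeviationEvent p n (1 / (2 * n) * p)) :=
        integral_le_add_mul_measureReal
          (measurable_trace_sq_mul_inv_sq.comp hRm).aestronglyMeasurable
          (measurableSet_gramDeviationEvent _ _ _) (by positivity) (fun Z => (hbound _).1)
          (fun Z => (hbound _).2) fun Z hZ =>
          trace_sq_mul_inv_sq_le_of_notMem_gramDeviationEvent (transpose_cfc _ S)
            (cfc_sqrt_mul_self hS.posSemidef) hc hcS hα.le hn hp0 hZ
    _ ≤ 16 * T / c ^ 4 / p ^ 4 + T / α ^ 4 * (C / p ^ 4) := by gcongr; exact hC p hp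
    _ ≤ (16 * T / c ^ 4 + T / α ^ 4 * C + 1) / p ^ 4 := by
        rw [add_div, add_div, ← mul_div_assoc]
        linarith [show 0 < 1 / (p : ℝ) ^ 4 by positivity]
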